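/- Let (x_i, y_i) ∈ ℝ² × ℝ², i = 1,…,m, be given. Suppose there is a real 3×3 matrix F of rank two with ŷ_iᵀ F x̂_i = 0 for all i, and a nonzero vector e₂ ∈ ker(Fᵀ), such that each (x_i,y_i) is ([e₂]_× F, e₂)-regular. Then there exist a finite camera P₂ non-coincident with P₁ = (I 0) and points w_i ∈ ℝ³ such that P₁ŵ_i is a nonzero scalar multiple of x̂_i and P₂ŵ_i is a nonzero scalar multiple of ŷ_i for all i = 1,…,m. -/

import Mathlib

open Matrix

noncomputable section

/-- For `u ∈ ℝⁿ`, `hat u = (u, 1)ᵀ ∈ ℝⁿ⁺¹`. -/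
def hat {n : ℕ} (u : Fin n → ℝ) : Fin (n + 1) → ℝ := Fin.snoc u 1

/-- The 3×4 matrix `(A b)` with left 3×3 block `A` and last column `b`. -/
def cam (A : Matrix (Fin 3) (Fin 3) ℝ) (b : Fin 3 → ℝ) : Matrix (Fin 3) (Fin 4) ℝ :=
  Matrix.of fun i => Fin.snoc (A i) (b i)

/-- The left 3×3 block of a 3×4 matrix. -/
def leftBlock (P : Matrix (Fin 3) (Fin 4) ℝ) : Matrix (Fin 3) (Fin 3) ℝ :=
  P.submatrix id Fin.castSucc

/-- A (projective) camera is a real 3×4 matrix of rank 3. -/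
def IsCamera (P : Matrix (Fin 3) (Fin 4) ℝ) : Prop := P.rank = 3

/-- A finite camera: the left 3×3 block is nonsingular. -/
def IsFiniteCamera (P : Matrix (Fin 3) (Fin 4) ℝ) : Prop := IsUnit (leftBlock P).det

/-- Two cameras are coincident if their camera centers agree up to a nonzero scale;
for rank-3 cameras the center is the (one-dimensional) kernel, so this says the two
cameras share a common nonzero kernel vector. -/
def Coincident (P Q : Matrix (Fin 3) (Fin 4) ℝ) : Prop :=
  ∃ c : Fin 4 → ℝ, c ≠ 0 ∧ P.mulVec c = 0 ∧ Q.mulVec c = 0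

/-- `u` is a nonzero scalar multiple of `v`. -/
def SimEq {n : ℕ} (u v : Fin n → ℝ) : Prop := ∃ c : ℝ, c ≠ 0 ∧ u = c • v

/-- The skew-symmetric matrix `[v]ₓ` with `[v]ₓ w = v × w`. -/
def skew (v : Fin 3 → ℝ) : Matrix (Fin 3) (Fin 3) ℝ :=
  !![0, -v 2, v 1; v 2, 0, -v 0; -v 1, v 0, 0]

/-- `(x, y)` is `(A, b)`-irregular. -/
def Irregular (A : Matrix (Fin 3) (Fin 3) ℝ) (b : Fin 3 → ℝ) (x y : Fin 2 → ℝ) : Prop :=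
  ((skew b * A).mulVec (hat x) = 0 ∧ Matrix.vecMul (hat y) (skew b) ≠ 0) ∨
  ((skew b * A).mulVec (hat x) ≠ 0 ∧ Matrix.vecMul (hat y) (skew b) = 0)

/-!
Take the second camera `(B | e₂)` with `B = [e₂]ₓ F + e₂ vᵀ`. It is finite as soon as `v` is not
orthogonal to the line `ker F`, and non-coincident with `(I 0)` since `e₂ ≠ 0`. A pair `(x, y)` is
reconstructed by `w = c x̂` once `c B x̂ + e₂ = d ŷ` with `c, d ≠ 0`. Put `g = F x̂`, so that
`B x̂ = e₂ ⨯₃ g + (v ⬝ᵥ x̂) e₂`. If `g = 0`, regularity makes `ŷ` parallel to `e₂`. Otherwise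
`e₂, g, e₂ ⨯₃ g` is an orthogonal frame, the epipolar constraint puts `ŷ` in the plane of `e₂` and
`e₂ ⨯₃ g`, regularity keeps it off the line of `e₂`, and the line `e₂ + ℝ B x̂` meets the line
`ℝ ŷ` away from `0` unless `v ⬝ᵥ x̂` takes one exceptional value. Finitely many affine
hyperplanes do not cover `ℝ³`, so a suitable `v` exists.
-/

theorem exists_forall_dotProduct_ne_zero {K n ι : Type*} [Field K] [Infinite K] [Fintype n]
    [Finite ι] (a : ι → n → K) (ha : ∀ i, a i ≠ 0) : ∃ w : n → K, ∀ i, w ⬝ᵥ a i ≠ 0 := by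
  by_contra! hcover
  obtain ⟨i, hi⟩ := Subspace.exists_eq_top_of_iUnion_eq_univ
    (p := fun i => LinearMap.ker (dotProductBilin K K (a i))) <|
    Set.eq_univ_of_forall fun w => Set.mem_iUnion.2 <| by simpa [dotProduct_comm] using hcover w
  exact ha i <| dotProduct_eq_zero_iff.1 (LinearMap.congr_fun (LinearMap.ker_eq_top.1 hi))

theorem exists_forall_dotProduct_ne {K n ι : Type*} [Field K] [Infinite K] [Fintype n]
    [Finite ι] (a : ι → n → K) (c : ι → K) (ha : ∀ i, a i ≠ 0) :
    ∃ v : n → K, ∀ i, v ⬝ᵥ a i ≠ c i := by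
  obtain ⟨w, hw⟩ := exists_forall_dotProduct_ne_zero a ha
  obtain ⟨t, ht⟩ := (Set.finite_range fun i => c i / (w ⬝ᵥ a i)).infinite_compl.nonempty
  refine ⟨t • w, fun i h => ht ⟨i, (div_eq_iff (hw i)).2 ?_⟩⟩
  rwa [smul_dotProduct, smul_eq_mul, eq_comm] at h

theorem Matrix.exists_forall_mulVec_eq_zero_eq_smul {K m n : Type*} [Field K] [Fintype n]
    (M : Matrix m n K) (hM : M.rank + 1 = Fintype.card n) :
    ∃ k ≠ 0, ∀ z, M *ᵥ z = 0 → ∃ t : K, z = t • k := by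
  have hker : Module.finrank K (LinearMap.ker M.mulVecLin) = 1 := by
    have := LinearMap.finrank_range_add_finrank_ker M.mulVecLin
    rw [Module.finrank_fintype_fun_eq_card] at this
    exact Nat.add_left_cancel (this.trans hM.symm)
  obtain ⟨⟨k, _⟩, hk, hspan⟩ := finrank_eq_one_iff'.1 hker
  refine ⟨k, fun h => hk (Subtype.ext h), fun z hz => ?_⟩
  obtain ⟨t, ht⟩ := hspan ⟨z, hz⟩
  exact ⟨t, congrArg Subtype.val ht.symm⟩

section CommRing

variable {R : Type*} [CommRing R] {u v : Fin 3 → R}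

theorem cross_dot_cross_self_of_dotProduct_eq_zero (h : u ⬝ᵥ v = 0) :
    u ⨯₃ v ⬝ᵥ u ⨯₃ v = (u ⬝ᵥ u) * (v ⬝ᵥ v) := by
  rw [cross_dot_cross, h, dotProduct_comm v u, h, mul_zero, sub_zero]

theorem dotProduct_self_smul_eq_of_cross_eq_zero (h : u ⨯₃ v = 0) :
    (u ⬝ᵥ u) • v = (u ⬝ᵥ v) • u := by
  have := cross_cross_eq_smul_sub_smul' u u v
  rw [h, (crossProduct u).map_zero, eq_comm, sub_eq_zero] at this
  exact this.symm

theorem cross_dot_cross_self_smul_eq_of_dotProduct_eq_zero {e g : Fin 3 → R}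
    (heg : e ⬝ᵥ g = 0) (hvg : v ⬝ᵥ g = 0) :
    (e ⨯₃ g ⬝ᵥ e ⨯₃ g) • v = (e ⨯₃ g ⬝ᵥ v) • e ⨯₃ g + ((e ⬝ᵥ v) * (g ⬝ᵥ g)) • e := by
  have hvu : v ⨯₃ (e ⨯₃ g) = -(e ⬝ᵥ v) • g := by
    rw [cross_cross_eq_smul_sub_smul', hvg, zero_smul, zero_sub, dotProduct_comm, neg_smul]
  have hug : e ⨯₃ g ⨯₃ g = -(g ⬝ᵥ g) • e := by
    rw [cross_cross_eq_smul_sub_smul, heg, zero_smul, zero_sub, neg_smul]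
  have := cross_cross_eq_smul_sub_smul' (e ⨯₃ g) v (e ⨯₃ g)
  rw [hvu, LinearMap.map_smul, hug, dotProduct_comm v] at this
  linear_combination (norm := module) -this

end CommRing

section OrderedField

variable {K : Type*} [Field K] [LinearOrder K] [IsStrictOrderedRing K] {u v : Fin 3 → K}

theorem cross_ne_zero_of_dotProduct_eq_zero (hu : u ≠ 0) (hv : v ≠ 0) (h : u ⬝ᵥ v = 0) :
    u ⨯₃ v ≠ 0 := by
  rw [Ne, ← dotProduct_self_eq_zero, cross_dot_cross_self_of_dotProduct_eq_zero h]
  exact mul_ne_zero (dotProduct_self_eq_zero.not.2 hu) (dotProduct_self_eq_zero.not.2 hv)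

theorem cross_cross_self_eq_zero_iff (hu : u ≠ 0) (h : u ⬝ᵥ v = 0) :
    u ⨯₃ (u ⨯₃ v) = 0 ↔ v = 0 := by
  refine ⟨fun huv => by_contra fun hv => ?_, fun hv => by simp [hv]⟩
  exact cross_ne_zero_of_dotProduct_eq_zero hu (cross_ne_zero_of_dotProduct_eq_zero hu hv h)
    (dot_self_cross u v) huv

theorem exists_smul_smul_add_eq_smul {e y : Fin 3 → K} {s : K} (he : e ≠ 0) (hy : y ≠ 0)
    (hs : s ≠ 0) (hey : e ⨯₃ y = 0) :
    ∃ c d : K, c ≠ 0 ∧ d ≠ 0 ∧ c • s • e + e = d • y := by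
  have hdec := dotProduct_self_smul_eq_of_cross_eq_zero hey
  have hee : e ⬝ᵥ e ≠ 0 := dotProduct_self_eq_zero.not.2 he
  have hey : e ⬝ᵥ y ≠ 0 := fun h => hy <| by
    rwa [h, zero_smul, smul_eq_zero, or_iff_right hee] at hdec
  refine ⟨s⁻¹, 2 * (e ⬝ᵥ e) / (e ⬝ᵥ y), inv_ne_zero hs, by positivity, ?_⟩
  rw [div_eq_inv_mul, mul_smul, mul_smul, hdec]
  match_scalars
  field_simp
  ring

theorem exists_smul_cross_add_eq_smul {e g y : Fin 3 → K} {s : K} (he : e ≠ 0) (hg : g ≠ 0)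
    (heg : e ⬝ᵥ g = 0) (hyg : y ⬝ᵥ g = 0) (hey : e ⨯₃ y ≠ 0)
    (hs : s ≠ (e ⬝ᵥ y) * (g ⬝ᵥ g) / (e ⨯₃ g ⬝ᵥ y)) :
    ∃ c d : K, c ≠ 0 ∧ d ≠ 0 ∧ c • (e ⨯₃ g + s • e) + e = d • y := by
  have hdec := cross_dot_cross_self_smul_eq_of_dotProduct_eq_zero heg hyg
  set u := e ⨯₃ g
  have hu : u ⬝ᵥ u ≠ 0 :=
    dotProduct_self_eq_zero.not.2 (cross_ne_zero_of_dotProduct_eq_zero he hg heg)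
  have huy : u ⬝ᵥ y ≠ 0 := fun h => hey <| by
    rw [h, zero_smul, zero_add] at hdec
    have := congrArg (crossProduct e) hdec
    rwa [LinearMap.map_smul, LinearMap.map_smul, cross_self, smul_zero, smul_eq_zero,
      or_iff_right hu] at this
  have hD : (e ⬝ᵥ y) * (g ⬝ᵥ g) - s * (u ⬝ᵥ y) ≠ 0 := by
    rwa [Ne, sub_eq_zero, ← div_eq_iff huy, eq_comm]
  refine ⟨(u ⬝ᵥ y) / ((e ⬝ᵥ y) * (g ⬝ᵥ g) - s * (u ⬝ᵥ y)),
    (u ⬝ᵥ u) / ((e ⬝ᵥ y) * (g ⬝ᵥ g) - s * (u ⬝ᵥ y)), div_ne_zero huy hD, div_ne_zero hu hD, ?_⟩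
  rw [div_eq_inv_mul, div_eq_inv_mul, mul_smul, mul_smul, hdec]
  match_scalars <;> field_simp
  ring

end OrderedField

theorem skew_mulVec (v w : Fin 3 → ℝ) : skew v *ᵥ w = v ⨯₃ w := by
  ext i
  fin_cases i <;> simp [skew, cross_apply, mulVec, dotProduct, Fin.sum_univ_three] <;> ring

theorem vecMul_skew (v w : Fin 3 → ℝ) : w ᵥ* skew v = w ⨯₃ v := by
  ext i
  fin_cases i <;> simp [skew, cross_apply, vecMul, dotProduct, Fin.sum_univ_three] <;> ring

theorem hat_ne_zero {n : ℕ} (u : Fin n → ℝ) : hat u ≠ 0 :=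
  fun h => by simpa [hat] using congrFun h (Fin.last n)

theorem cam_mulVec_hat (A : Matrix (Fin 3) (Fin 3) ℝ) (b w : Fin 3 → ℝ) :
    cam A b *ᵥ hat w = A *ᵥ w + b := by
  ext i
  simp only [cam, hat, mulVec, dotProduct, of_apply, Fin.sum_univ_castSucc, Fin.snoc_castSucc,
    Fin.snoc_last, Pi.add_apply, mul_one]

theorem not_irregular_skew_mul_iff {F : Matrix (Fin 3) (Fin 3) ℝ} {e : Fin 3 → ℝ} (he : e ≠ 0)
    (hFe : ∀ z, e ⬝ᵥ F *ᵥ z = 0) (x y : Fin 2 → ℝ) :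
    ¬ Irregular (skew e * F) e x y ↔ (F *ᵥ hat x = 0 ↔ e ⨯₃ hat y = 0) := by
  simp only [Irregular, ne_eq]
  rw [← mulVec_mulVec, ← mulVec_mulVec, skew_mulVec, skew_mulVec,
    cross_cross_self_eq_zero_iff he (hFe _), vecMul_skew, ← cross_anticomm, neg_eq_zero]
  tauto

def canonicalBlock (F : Matrix (Fin 3) (Fin 3) ℝ) (e v : Fin 3 → ℝ) : Matrix (Fin 3) (Fin 3) ℝ :=
  skew e * F + vecMulVec e v

section CanonicalBlock

variable {F : Matrix (Fin 3) (Fin 3) ℝ} {e v : Fin 3 → ℝ}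

theorem canonicalBlock_mulVec (z : Fin 3 → ℝ) :
    canonicalBlock F e v *ᵥ z = e ⨯₃ (F *ᵥ z) + (v ⬝ᵥ z) • e := by
  rw [canonicalBlock, add_mulVec, ← mulVec_mulVec, skew_mulVec, vecMulVec_mulVec,
    op_smul_eq_smul]

theorem det_canonicalBlock_ne_zero (he : e ≠ 0) (hFe : ∀ z, e ⬝ᵥ F *ᵥ z = 0)
    (hv : ∀ z, F *ᵥ z = 0 → v ⬝ᵥ z = 0 → z = 0) : (canonicalBlock F e v).det ≠ 0 := by
  intro hdet
  obtain ⟨z, hz, hBz⟩ := exists_mulVec_eq_zero_iff.2 hdet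
  rw [canonicalBlock_mulVec] at hBz
  have hvz : v ⬝ᵥ z = 0 := by
    have := congrArg (e ⬝ᵥ ·) hBz
    simpa [dotProduct_add, dot_self_cross, dotProduct_smul,
      dotProduct_self_eq_zero.not.2 he] using this
  rw [hvz, zero_smul, add_zero] at hBz
  have hFz : F *ᵥ z = 0 :=
    by_contra fun hFz => cross_ne_zero_of_dotProduct_eq_zero he hFz (hFe z) hBz
  exact hz (hv z hFz hvz)

theorem exists_smul_canonicalBlock_mulVec_add_eq_smul (he : e ≠ 0)
    (hFe : ∀ z, e ⬝ᵥ F *ᵥ z = 0) (hv : ∀ z, F *ᵥ z = 0 → v ⬝ᵥ z = 0 → z = 0)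
    {X Y : Fin 3 → ℝ} (hX : X ≠ 0) (hY : Y ≠ 0)
    (hep : Y ⬝ᵥ F *ᵥ X = 0) (hreg : F *ᵥ X = 0 ↔ e ⨯₃ Y = 0)
    (hs : v ⬝ᵥ X ≠ (e ⬝ᵥ Y) * (F *ᵥ X ⬝ᵥ F *ᵥ X) / (e ⨯₃ (F *ᵥ X) ⬝ᵥ Y)) :
    ∃ c d : ℝ, c ≠ 0 ∧ d ≠ 0 ∧ c • canonicalBlock F e v *ᵥ X + e = d • Y := by
  rw [canonicalBlock_mulVec]
  by_cases hg : F *ᵥ X = 0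
  · rw [hg, map_zero, zero_add]
    exact exists_smul_smul_add_eq_smul he hY (fun h => hX (hv X hg h)) (hreg.1 hg)
  · exact exists_smul_cross_add_eq_smul he hg (hFe X) hep (mt hreg.2 hg) hs

end CanonicalBlock

/-- From a fundamental matrix whose epipolar constraints hold and regularity of all point
pairs, one obtains a finite reconstruction with non-coincident cameras, the first being
`(I 0)`. -/
theorem stmt12 (m : ℕ) (x y : Fin m → Fin 2 → ℝ)
    (F : Matrix (Fin 3) (Fin 3) ℝ) (hF : F.rank = 2)
    (hep : ∀ i, hat (y i) ⬝ᵥ F.mulVec (hat (x i)) = 0)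
    (e₂ : Fin 3 → ℝ) (he : e₂ ≠ 0) (hker : Fᵀ.mulVec e₂ = 0)
    (hreg : ∀ i, ¬ Irregular (skew e₂ * F) e₂ (x i) (y i)) :
    ∃ (A : Matrix (Fin 3) (Fin 3) ℝ) (b : Fin 3 → ℝ), IsUnit A.det ∧ b ≠ 0 ∧
      ∃ w : Fin m → Fin 3 → ℝ, ∀ i,
        SimEq ((cam 1 0).mulVec (hat (w i))) (hat (x i)) ∧
        SimEq ((cam A b).mulVec (hat (w i))) (hat (y i)) := by
  have hFe : ∀ z, e₂ ⬝ᵥ F *ᵥ z = 0 := fun z => by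
    rw [dotProduct_mulVec, ← mulVec_transpose, hker, zero_dotProduct]
  obtain ⟨k, hk, hkerF⟩ := F.exists_forall_mulVec_eq_zero_eq_smul (by rw [hF, Fintype.card_fin])
  obtain ⟨v, hv⟩ := exists_forall_dotProduct_ne (ι := Option (Fin m))
    (fun o => o.elim k fun i => hat (x i))
    (fun o => o.elim 0 fun i => (e₂ ⬝ᵥ hat (y i)) * (F *ᵥ hat (x i) ⬝ᵥ F *ᵥ hat (x i)) /
      (e₂ ⨯₃ (F *ᵥ hat (x i)) ⬝ᵥ hat (y i)))
    (by rintro (_ | i); exacts [hk, hat_ne_zero _])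
  have hvk : v ⬝ᵥ k ≠ 0 := hv none
  have hvF : ∀ z, F *ᵥ z = 0 → v ⬝ᵥ z = 0 → z = 0 := fun z hz hvz => by
    obtain ⟨t, rfl⟩ := hkerF z hz
    rw [dotProduct_smul, smul_eq_mul, mul_eq_zero, or_iff_left hvk] at hvz
    rw [hvz, zero_smul]
  choose c d hc hd hcd using fun i => exists_smul_canonicalBlock_mulVec_add_eq_smul he hFe hvF
    (hat_ne_zero (x i)) (hat_ne_zero (y i)) (hep i)
    ((not_irregular_skew_mul_iff he hFe _ _).1 (hreg i)) (hv (some i))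
  refine ⟨canonicalBlock F e₂ v, e₂, (det_canonicalBlock_ne_zero he hFe hvF).isUnit, he,
    fun i => c i • hat (x i), fun i => ⟨⟨c i, hc i, ?_⟩, d i, hd i, ?_⟩⟩
  · rw [cam_mulVec_hat, one_mulVec, add_zero]
  · rw [cam_mulVec_hat, mulVec_smul, hcd]
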